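/- Let ε > 0, α > 0, c ∈ [0,1], and x > 0. With p₀(t) := (x/√(2π))t^{−3/2}e^{−x²/(2t)} and p¹(t) := (1 + ε(cx + (1 − e^{−2αx})(αt − x)/(2αx)))·p₀(t) − ε(α/4)(1 − e^{−2αx})·e^{α²t/2 + αx}·Erfc(x/√(2t) + α√(t/2)), the ratio p¹(t)/p₀(t) converges to 1 + ε(cx − (1 − e^{−2αx})/(2α)) as t → 0⁺. -/

import Mathlib

open MeasureTheory

/-- The complementary error function `Erfc(z) = (2/√π) ∫_z^∞ e^{−y²} dy`. -/
noncomputable def Erfc (z : ℝ) : ℝ :=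
  (2 / Real.sqrt Real.pi) * ∫ y in Set.Ioi z, Real.exp (-y ^ 2)

/-! Dividing by `p₀`, the ratio `p¹/p₀` is an affine function of `t`, whose value at `0` is the
claimed limit, minus a constant multiple of `e^{α²t/2 + αx} Erfc(z) / p₀(t)` with
`z = x/√(2t) + α√(t/2)`. Since `z² = x²/(2t) + αx + α²t/2`, the Gaussian tail bound
`Erfc z ≤ e^{-z²}/(√π z)` cancels the factor `e^{-x²/(2t)}` of `p₀` and bounds that quotient
by `2t²/x²`, which vanishes as `t → 0⁺`. -/

open Real Set Filter Topology

lemma integral_Ioi_mul_exp_neg_sq (z : ℝ) :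
    ∫ y in Ioi z, y * exp (-y ^ 2) = exp (-z ^ 2) / 2 := by
  have hderiv : ∀ y ∈ Ici z, HasDerivAt (fun y ↦ -exp (-y ^ 2) / 2) (y * exp (-y ^ 2)) y := by
    intro y _
    have h : HasDerivAt (fun y ↦ -exp (-y ^ 2) / 2) _ y :=
      (hasDerivAt_pow 2 y).neg.exp.neg.div_const 2
    convert h using 1
    simp only [Pi.neg_apply]
    ring
  have hint : IntegrableOn (fun y ↦ y * exp (-y ^ 2)) (Ioi z) := by
    simpa using (integrable_mul_exp_neg_mul_sq one_pos).integrableOn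
  have hlim : Tendsto (fun y ↦ -exp (-y ^ 2) / 2) atTop (𝓝 0) := by
    simpa using ((tendsto_exp_atBot.comp
      (tendsto_neg_atTop_atBot.comp (tendsto_pow_atTop two_ne_zero))).neg.div_const 2)
  rw [integral_Ioi_of_hasDerivAt_of_tendsto' hderiv hint hlim]
  ring

lemma integral_Ioi_exp_neg_sq_le {z : ℝ} (hz : 0 < z) :
    ∫ y in Ioi z, exp (-y ^ 2) ≤ exp (-z ^ 2) / (2 * z) := by
  calc ∫ y in Ioi z, exp (-y ^ 2)
      ≤ ∫ y in Ioi z, z⁻¹ * (y * exp (-y ^ 2)) := by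
        refine setIntegral_mono_on ?_ ?_ measurableSet_Ioi fun y hy ↦ ?_
        · simpa using (integrable_exp_neg_mul_sq one_pos).integrableOn
        · simpa using ((integrable_mul_exp_neg_mul_sq one_pos).const_mul z⁻¹).integrableOn
        rw [← mul_assoc]
        exact le_mul_of_one_le_left (exp_pos _).le
          ((one_le_inv_mul₀ hz).2 hy.le)
    _ = exp (-z ^ 2) / (2 * z) := by
        rw [integral_const_mul, integral_Ioi_mul_exp_neg_sq]
        field_simp

lemma Erfc_nonneg (z : ℝ) : 0 ≤ Erfc z :=
  mul_nonneg (by positivity) (setIntegral_nonneg measurableSet_Ioi fun _ _ ↦ (exp_pos _).le)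

lemma Erfc_le {z : ℝ} (hz : 0 < z) : Erfc z ≤ exp (-z ^ 2) / (sqrt π * z) := by
  calc Erfc z ≤ 2 / sqrt π * (exp (-z ^ 2) / (2 * z)) :=
        mul_le_mul_of_nonneg_left (integral_Ioi_exp_neg_sq_le hz) (by positivity)
    _ = exp (-z ^ 2) / (sqrt π * z) := by field_simp

noncomputable def brownianHittingDensity (x t : ℝ) : ℝ :=
  x / sqrt (2 * π) * t ^ (-(3 : ℝ) / 2) * exp (-x ^ 2 / (2 * t))

lemma brownianHittingDensity_pos {x t : ℝ} (hx : 0 < x) (ht : 0 < t) :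
    0 < brownianHittingDensity x t := by
  unfold brownianHittingDensity
  have := rpow_pos_of_pos ht (-(3 : ℝ) / 2)
  positivity

lemma sq_div_sqrt_add_mul_sqrt {x t : ℝ} (α : ℝ) (ht : 0 < t) :
    (x / sqrt (2 * t) + α * sqrt (t / 2)) ^ 2 = x ^ 2 / (2 * t) + α * x + α ^ 2 * t / 2 := by
  obtain ⟨s, hs, rfl⟩ : ∃ s > 0, t = 2 * s ^ 2 :=
    ⟨sqrt (t / 2), sqrt_pos.2 (by positivity), by rw [sq_sqrt (by positivity)]; ring⟩
  have h2t : sqrt (2 * (2 * s ^ 2)) = 2 * s := by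
    rw [show 2 * (2 * s ^ 2) = (2 * s) ^ 2 by ring, sqrt_sq (by positivity)]
  have ht2 : sqrt (2 * s ^ 2 / 2) = s := by
    rw [mul_div_cancel_left₀ _ two_ne_zero, sqrt_sq hs.le]
  rw [h2t, ht2]
  field_simp
  ring

lemma exp_mul_Erfc_le {α x t : ℝ} (hα : 0 ≤ α) (hx : 0 < x) (ht : 0 < t) :
    exp (α ^ 2 * t / 2 + α * x) * Erfc (x / sqrt (2 * t) + α * sqrt (t / 2)) ≤
      2 * t ^ 2 / x ^ 2 * brownianHittingDensity x t := by
  set z := x / sqrt (2 * t) + α * sqrt (t / 2)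
  have hlow : 0 < x / sqrt (2 * t) := by positivity
  have hz : x / sqrt (2 * t) ≤ z := le_add_of_nonneg_right (by positivity)
  have hexp : exp (α ^ 2 * t / 2 + α * x) * exp (-z ^ 2) = exp (-x ^ 2 / (2 * t)) := by
    rw [← exp_add, sq_div_sqrt_add_mul_sqrt α ht]
    ring_nf
  have hpow : t ^ 2 * t ^ (-(3 : ℝ) / 2) = sqrt t := by
    rw [sqrt_eq_rpow, ← rpow_natCast, ← rpow_add ht]
    norm_num
  calc exp (α ^ 2 * t / 2 + α * x) * Erfc z
      ≤ exp (α ^ 2 * t / 2 + α * x) * (exp (-z ^ 2) / (sqrt π * (x / sqrt (2 * t)))) := by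
        gcongr
        exact (Erfc_le (hlow.trans_le hz)).trans (by gcongr)
    _ = exp (-x ^ 2 / (2 * t)) * sqrt (2 * t) / (sqrt π * x) := by
        rw [← hexp]
        field_simp
    _ = 2 * t ^ 2 / x ^ 2 * brownianHittingDensity x t := by
        have h2 : sqrt 2 ^ 2 = 2 := sq_sqrt zero_le_two
        unfold brownianHittingDensity
        rw [show 2 * t ^ 2 / x ^ 2 * (x / sqrt (2 * π) * t ^ (-(3 : ℝ) / 2) *
            exp (-x ^ 2 / (2 * t))) =
            2 * (t ^ 2 * t ^ (-(3 : ℝ) / 2)) * exp (-x ^ 2 / (2 * t)) / (x * sqrt (2 * π)) by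
          field_simp, hpow, sqrt_mul zero_le_two, sqrt_mul zero_le_two]
        field_simp
        rw [h2]

lemma tendsto_exp_mul_Erfc_div_brownianHittingDensity {α x : ℝ} (hα : 0 ≤ α) (hx : 0 < x) :
    Tendsto (fun t ↦ exp (α ^ 2 * t / 2 + α * x) * Erfc (x / sqrt (2 * t) + α * sqrt (t / 2)) /
      brownianHittingDensity x t) (𝓝[>] 0) (𝓝 0) := by
  have hbound : Tendsto (fun t : ℝ ↦ 2 * t ^ 2 / x ^ 2) (𝓝[>] 0) (𝓝 0) := by
    simpa using ((continuous_const.mul (continuous_pow 2)).div_const (x ^ 2)).tendsto' 0 _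
      (by simp) |>.mono_left nhdsWithin_le_nhds
  refine squeeze_zero' ?_ ?_ hbound
  all_goals filter_upwards [self_mem_nhdsWithin] with t (ht : 0 < t)
  · exact div_nonneg (mul_nonneg (exp_pos _).le (Erfc_nonneg _))
      (brownianHittingDensity_pos hx ht).le
  · exact (div_le_iff₀ (brownianHittingDensity_pos hx ht)).2 (exp_mul_Erfc_le hα hx ht)

theorem perturbed_density_left_tail_general
    (ε α c x : ℝ) (hα : 0 < α) (hx : 0 < x)
    (p₀ p₁ : ℝ → ℝ)
    (hp₀ : ∀ t : ℝ, 0 < t → p₀ t =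
      (x / Real.sqrt (2 * Real.pi)) * t ^ (-(3 : ℝ) / 2) * Real.exp (-x ^ 2 / (2 * t)))
    (hp₁ : ∀ t : ℝ, 0 < t → p₁ t =
      (1 + ε * (c * x + (1 - Real.exp (-2 * α * x)) * (α * t - x) / (2 * α * x))) * p₀ t -
        ε * (α / 4) * (1 - Real.exp (-2 * α * x)) *
          Real.exp (α ^ 2 * t / 2 + α * x) *
          Erfc (x / Real.sqrt (2 * t) + α * Real.sqrt (t / 2))) :
    Filter.Tendsto (fun t => p₁ t / p₀ t) (nhdsWithin 0 (Set.Ioi 0))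
      (nhds (1 + ε * (c * x - (1 - Real.exp (-2 * α * x)) / (2 * α)))) := by
  set e := 1 - exp (-2 * α * x)
  have hdrift : Tendsto (fun t ↦ 1 + ε * (c * x + e * (α * t - x) / (2 * α * x))) (𝓝[>] 0)
      (𝓝 (1 + ε * (c * x - e / (2 * α)))) := by
    have hcont : Continuous fun t ↦ 1 + ε * (c * x + e * (α * t - x) / (2 * α * x)) := by
      fun_prop
    convert hcont.continuousWithinAt.tendsto using 2
    field_simp
    ring
  have hErfc := (tendsto_exp_mul_Erfc_div_brownianHittingDensity hα.le hx).const_mul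
    (ε * (α / 4) * e)
  have hlim := hdrift.sub hErfc
  rw [mul_zero, sub_zero] at hlim
  refine hlim.congr' ?_
  filter_upwards [self_mem_nhdsWithin] with t (ht : 0 < t)
  have hp₀t : p₀ t = brownianHittingDensity x t := hp₀ t ht
  rw [hp₁ t ht, hp₀t, sub_div, mul_div_cancel_right₀ _ (brownianHittingDensity_pos hx ht).ne']
  ring

/-- Left tail asymptotic of the perturbed FPT density:
`p¹(t)/p₀(t) → 1 + ε(cx − (1 − e^{−2αx})/(2α))` as `t → 0⁺`. -/
theorem perturbed_density_left_tail
    (ε α c x : ℝ) (hε : 0 < ε) (hα : 0 < α) (hc0 : 0 ≤ c) (hc1 : c ≤ 1) (hx : 0 < x)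
    (p₀ p₁ : ℝ → ℝ)
    (hp₀ : ∀ t : ℝ, 0 < t → p₀ t =
      (x / Real.sqrt (2 * Real.pi)) * t ^ (-(3 : ℝ) / 2) * Real.exp (-x ^ 2 / (2 * t)))
    (hp₁ : ∀ t : ℝ, 0 < t → p₁ t =
      (1 + ε * (c * x + (1 - Real.exp (-2 * α * x)) * (α * t - x) / (2 * α * x))) * p₀ t -
        ε * (α / 4) * (1 - Real.exp (-2 * α * x)) *
          Real.exp (α ^ 2 * t / 2 + α * x) *
          Erfc (x / Real.sqrt (2 * t) + α * Real.sqrt (t / 2))) :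
    Filter.Tendsto (fun t => p₁ t / p₀ t) (nhdsWithin 0 (Set.Ioi 0))
      (nhds (1 + ε * (c * x - (1 - Real.exp (-2 * α * x)) / (2 * α)))) :=
  perturbed_density_left_tail_general ε α c x hα hx p₀ p₁ hp₀ hp₁
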